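/- arXiv:2505.23160 — 3 statements merged into one kernel-verified Lean document; each statement's English description precedes it below -/
import Mathlib

section
/- Closed form of the double hard-thresholding proximal operator: for v ∈ ℝ and λ₀, λ₁ ≥ 0 with √(2λ₀) < 1 − √(2λ₁) and v ∈ (0,1), the minimizer over u ∈ [0,1] of F(u) = ½(u − v)² + λ₀·1{u≠0} + λ₁·1{u≠1} equals 0 if v ≤ √(2λ₀), equals v if √(2λ₀) < v < 1 − √(2λ₁), and equals 1 if v ≥ 1 − √(2λ₁). -/
open Real

/-! Away from the two jump points the objective is at least `λ₀ + λ₁`, which is its value at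
`v`; so the minimum is the smallest of `F 0 = v²/2 + λ₁`, `F 1 = (1 - v)²/2 + λ₀` and
`λ₀ + λ₁`. Squaring the thresholds (legitimate since `0 < v < 1`) turns each regime into
linear comparisons of these three numbers. -/

noncomputable def doubleHardThresholdCost (v lam0 lam1 u : ℝ) : ℝ :=
  (u - v) ^ 2 / 2 + (if u ≠ 0 then lam0 else 0) + (if u ≠ 1 then lam1 else 0)

section

variable {v lam0 lam1 m : ℝ}

@[simp]
theorem doubleHardThresholdCost_zero :
    doubleHardThresholdCost v lam0 lam1 0 = v ^ 2 / 2 + lam1 := by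
  simp [doubleHardThresholdCost]

@[simp]
theorem doubleHardThresholdCost_one :
    doubleHardThresholdCost v lam0 lam1 1 = (1 - v) ^ 2 / 2 + lam0 := by
  simp [doubleHardThresholdCost]

theorem doubleHardThresholdCost_of_ne {u : ℝ} (h0 : u ≠ 0) (h1 : u ≠ 1) :
    doubleHardThresholdCost v lam0 lam1 u = (u - v) ^ 2 / 2 + lam0 + lam1 := by
  simp [doubleHardThresholdCost, h0, h1]

theorem doubleHardThresholdCost_self (h0 : v ≠ 0) (h1 : v ≠ 1) :
    doubleHardThresholdCost v lam0 lam1 v = lam0 + lam1 := by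
  simp [doubleHardThresholdCost_of_ne h0 h1]

theorem le_doubleHardThresholdCost (hzero : m ≤ v ^ 2 / 2 + lam1)
    (hone : m ≤ (1 - v) ^ 2 / 2 + lam0)
    (hmid : m ≤ lam0 + lam1) (u : ℝ) : m ≤ doubleHardThresholdCost v lam0 lam1 u := by
  by_cases h0 : u = 0
  · simpa [h0] using hzero
  by_cases h1 : u = 1
  · simpa [h1] using hone
  rw [doubleHardThresholdCost_of_ne h0 h1]
  linarith [sq_nonneg (u - v)]

end

theorem double_hard_thresholding_closed_form_general
    (v lam0 lam1 : ℝ)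
    (hthr : Real.sqrt (2 * lam0) < 1 - Real.sqrt (2 * lam1))
    (hv : v ∈ Set.Ioo (0 : ℝ) 1)
    (F : ℝ → ℝ)
    (hF : ∀ u : ℝ, F u = (u - v) ^ 2 / 2 +
      (if u ≠ 0 then lam0 else 0) + (if u ≠ 1 then lam1 else 0)) :
    (v ≤ Real.sqrt (2 * lam0) → ∀ u ∈ Set.Icc (0 : ℝ) 1, F 0 ≤ F u) ∧
    (Real.sqrt (2 * lam0) < v → v < 1 - Real.sqrt (2 * lam1) →
      ∀ u ∈ Set.Icc (0 : ℝ) 1, F v ≤ F u) ∧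
    (1 - Real.sqrt (2 * lam1) ≤ v → ∀ u ∈ Set.Icc (0 : ℝ) 1, F 1 ≤ F u) := by
  obtain ⟨hv0, hv1⟩ := hv
  obtain rfl : F = doubleHardThresholdCost v lam0 lam1 := funext hF
  have hw : 0 < 1 - v := sub_pos.2 hv1
  refine ⟨fun h u _ => ?_, fun h h' u _ => ?_, fun h u _ => ?_⟩
  · have h0 : v ^ 2 ≤ 2 * lam0 := (le_sqrt' hv0).1 h
    have h1 : 2 * lam1 < (1 - v) ^ 2 := (sqrt_lt' hw).1 (by linarith)
    rw [doubleHardThresholdCost_zero]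
    exact le_doubleHardThresholdCost le_rfl (by linarith) (by linarith) u
  · have h0 : 2 * lam0 < v ^ 2 := (sqrt_lt' hv0).1 h
    have h1 : 2 * lam1 < (1 - v) ^ 2 := (sqrt_lt' hw).1 (by linarith)
    rw [doubleHardThresholdCost_self hv0.ne' hv1.ne]
    exact le_doubleHardThresholdCost (by linarith) (by linarith) le_rfl u
  · have h0 : 2 * lam0 < v ^ 2 := (sqrt_lt' hv0).1 (by linarith)
    have h1 : (1 - v) ^ 2 ≤ 2 * lam1 := (le_sqrt' hw).1 (by linarith)
    rw [doubleHardThresholdCost_one]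
    exact le_doubleHardThresholdCost (by linarith) le_rfl (by linarith) u

/-- Closed form of the double hard-thresholding proximal operator: for
`v ∈ (0,1)` and `λ₀, λ₁ ≥ 0` with `√(2λ₀) < 1 - √(2λ₁)`, the minimum over
`u ∈ [0,1]` of `F(u) = ½(u - v)² + λ₀·1{u ≠ 0} + λ₁·1{u ≠ 1}` is attained at
`0` if `v ≤ √(2λ₀)`, at `v` if `√(2λ₀) < v < 1 - √(2λ₁)`, and at `1` if
`v ≥ 1 - √(2λ₁)`. -/
theorem double_hard_thresholding_closed_form
    (v lam0 lam1 : ℝ) (hl0 : 0 ≤ lam0) (hl1 : 0 ≤ lam1)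
    (hthr : Real.sqrt (2 * lam0) < 1 - Real.sqrt (2 * lam1))
    (hv : v ∈ Set.Ioo (0 : ℝ) 1)
    (F : ℝ → ℝ)
    (hF : ∀ u : ℝ, F u = (u - v) ^ 2 / 2 +
      (if u ≠ 0 then lam0 else 0) + (if u ≠ 1 then lam1 else 0)) :
    (v ≤ Real.sqrt (2 * lam0) → ∀ u ∈ Set.Icc (0 : ℝ) 1, F 0 ≤ F u) ∧
    (Real.sqrt (2 * lam0) < v → v < 1 - Real.sqrt (2 * lam1) →
      ∀ u ∈ Set.Icc (0 : ℝ) 1, F v ≤ F u) ∧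
    (1 - Real.sqrt (2 * lam1) ≤ v → ∀ u ∈ Set.Icc (0 : ℝ) 1, F 1 ≤ F u) :=
  double_hard_thresholding_closed_form_general v lam0 lam1 hthr hv F hF
end

section
/- Distributed stability (Theorem 2): let A ∈ ℝ^{E×E} be a row-stochastic irreducible matrix with nonnegative entries, let T_i ∈ ℝ^{d×d} for i = 1,…,E be symmetric matrices with ‖T_i‖₂ ≤ 1 for all i, and suppose there exists k̄ with ‖T_{k̄}‖₂ < 1. Then the block matrix B = (A ⊗ I_d)·diag(T_1,…,T_E) has spectral radius strictly less than 1. -/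
/-!
Let `B v = λ v` with `|λ| ≥ 1`, and cut `v` into blocks `w i ∈ ℂ^d`, so that
`λ w i = ∑ j, A i j • T j (w j)`. Since `A` is row-stochastic and each (complexified) `T j` is a
contraction, at a block `i` of maximal norm the triangle inequality is an equality: every block `j`
with `A i j > 0` satisfies `‖T j (w j)‖ = ‖w i‖`, so it is again of maximal norm. By irreducibility
this reaches the block `k̄` with `‖T k̄‖ < 1`, forcing the maximal norm, hence `v`, to vanish.
-/

open Matrix Kronecker

lemma EuclideanSpace.norm_sq_eq_norm_re_sq_add_norm_im_sq {n : Type*} [Fintype n]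
    (w : EuclideanSpace ℂ n) :
    ‖w‖ ^ 2 = ‖WithLp.toLp 2 (fun q => (w q).re)‖ ^ 2 + ‖WithLp.toLp 2 (fun q => (w q).im)‖ ^ 2 := by
  rw [EuclideanSpace.norm_sq_eq, EuclideanSpace.norm_sq_eq, EuclideanSpace.norm_sq_eq,
    ← Finset.sum_add_distrib]
  refine Finset.sum_congr rfl fun q _ => ?_
  simp only [Real.norm_eq_abs, sq_abs, Complex.sq_norm, Complex.normSq_apply]
  ring

lemma Matrix.norm_toEuclideanCLM_map_ofReal_le {n : Type*} [Fintype n] [DecidableEq n]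
    (M : Matrix n n ℝ) :
    ‖toEuclideanCLM (𝕜 := ℂ) (M.map (↑))‖ ≤ ‖toEuclideanCLM (𝕜 := ℝ) M‖ := by
  refine ContinuousLinearMap.opNorm_le_bound _ (norm_nonneg _) fun w => ?_
  have hre : WithLp.toLp 2 (fun p => (toEuclideanCLM (𝕜 := ℂ) (M.map (↑)) w p).re)
      = toEuclideanCLM (𝕜 := ℝ) M (WithLp.toLp 2 fun q => (w q).re) := by
    ext p
    simp [toEuclideanCLM_toLp, mulVec, dotProduct, Complex.re_sum]
  have him : WithLp.toLp 2 (fun p => (toEuclideanCLM (𝕜 := ℂ) (M.map (↑)) w p).im)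
      = toEuclideanCLM (𝕜 := ℝ) M (WithLp.toLp 2 fun q => (w q).im) := by
    ext p
    simp [toEuclideanCLM_toLp, mulVec, dotProduct, Complex.im_sum]
  rw [← pow_le_pow_iff_left₀ (norm_nonneg _) (by positivity) two_ne_zero, mul_pow,
    EuclideanSpace.norm_sq_eq_norm_re_sq_add_norm_im_sq,
    EuclideanSpace.norm_sq_eq_norm_re_sq_add_norm_im_sq w, hre, him, mul_add, ← mul_pow, ← mul_pow]
  gcongr <;> exact ContinuousLinearMap.le_opNorm _ _

lemma eq_of_le_weighted_sum {ι : Type*} [Fintype ι] {a t : ι → ℝ} {m : ℝ}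
    (ha : ∀ j, 0 ≤ a j) (ha_sum : ∑ j, a j = 1) (ht : ∀ j, t j ≤ m)
    (hm : m ≤ ∑ j, a j * t j) {j : ι} (hj : 0 < a j) : t j = m := by
  have hle : ∀ j ∈ Finset.univ, a j * t j ≤ a j * m :=
    fun j _ => mul_le_mul_of_nonneg_left (ht j) (ha j)
  have hsum : ∑ j, a j * t j = ∑ j, a j * m := by
    refine le_antisymm (Finset.sum_le_sum hle) ?_
    rwa [← Finset.sum_mul, ha_sum, one_mul]
  exact mul_left_cancel₀ hj.ne' ((Finset.sum_eq_sum_iff_of_le hle).mp hsum j (Finset.mem_univ j))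

lemma norm_eq_of_smul_eq_weighted_sum {𝕜 V ι : Type*} [RCLike 𝕜] [NormedAddCommGroup V]
    [NormedSpace 𝕜 V] [Fintype ι] {a : ι → ℝ} (ha : ∀ j, 0 ≤ a j) (ha_sum : ∑ j, a j = 1)
    {c : 𝕜} (hc : 1 ≤ ‖c‖) {x : V} {u : ι → V} (hu : ∀ j, ‖u j‖ ≤ ‖x‖)
    (hx : c • x = ∑ j, (a j : 𝕜) • u j) {j : ι} (hj : 0 < a j) : ‖u j‖ = ‖x‖ := by
  refine eq_of_le_weighted_sum ha ha_sum hu ?_ hj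
  calc ‖x‖ ≤ ‖c‖ * ‖x‖ := le_mul_of_one_le_left (norm_nonneg x) hc
    _ = ‖∑ j, (a j : 𝕜) • u j‖ := by rw [← norm_smul, hx]
    _ ≤ ∑ j, ‖(a j : 𝕜) • u j‖ := norm_sum_le _ _
    _ = ∑ j, a j * ‖u j‖ := by
      simp only [norm_smul, RCLike.norm_ofReal, abs_of_nonneg (ha _)]

namespace Matrix

lemma exists_pos_of_mul_apply_pos {l m n : Type*} [Fintype m] {M : Matrix l m ℝ}
    {N : Matrix m n ℝ} (hN : ∀ i j, 0 ≤ N i j) {i : l} {j : n} (h : 0 < (M * N) i j) :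
    ∃ x, 0 < M i x ∧ 0 < N x j := by
  obtain ⟨x, -, hx⟩ := Finset.exists_lt_of_sum_lt (s := Finset.univ) (f := fun _ => (0 : ℝ))
    (g := fun x => M i x * N x j) (by simpa [mul_apply] using h)
  rcases pos_and_pos_or_neg_and_neg_of_mul_pos hx with h | ⟨-, h⟩
  · exact ⟨x, h⟩
  · exact absurd (hN x j) h.not_ge

lemma of_pow_apply_pos {ι : Type*} [Fintype ι] [DecidableEq ι] {A : Matrix ι ι ℝ}
    (hA : ∀ i j, 0 ≤ A i j) {P : ι → Prop} (hP : ∀ i j, P i → 0 < A i j → P j) (k : ℕ)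
    {i j : ι} (hi : P i) (hk : 0 < (A ^ k) i j) : P j := by
  induction k generalizing j with
  | zero =>
    obtain rfl : i = j := by by_contra h; simp [one_apply_ne h] at hk
    exact hi
  | succ k ih =>
    obtain ⟨x, hix, hxj⟩ := exists_pos_of_mul_apply_pos hA (pow_succ A k ▸ hk)
    exact hP x j (ih hix) hxj

lemma kronecker_one_mul_blockDiag_apply {ι κ R : Type*} [Fintype ι] [Fintype κ]
    [DecidableEq ι] [DecidableEq κ] [CommSemiring R] (A : Matrix ι ι R) (T : ι → Matrix κ κ R)
    (i k : ι) (p r : κ) :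
    ((A ⊗ₖ (1 : Matrix κ κ R)) * of (fun p q : ι × κ => if p.1 = q.1 then T p.1 p.2 q.2 else 0))
      (i, p) (k, r) = A i k * T k p r := by
  simp [mul_apply, one_apply, Fintype.sum_prod_type, ite_mul, Finset.sum_ite_eq]

lemma map_ofReal_kronecker_one_mul_blockDiag_mulVec {ι κ : Type*} [Fintype ι] [Fintype κ]
    [DecidableEq ι] [DecidableEq κ] (A : Matrix ι ι ℝ) (T : ι → Matrix κ κ ℝ) (v : ι × κ → ℂ)
    (i : ι) (p : κ) :
    (((A ⊗ₖ (1 : Matrix κ κ ℝ)) *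
        of (fun p q : ι × κ => if p.1 = q.1 then T p.1 p.2 q.2 else 0)).map (↑) *ᵥ v) (i, p)
      = ∑ k, (A i k : ℂ) * ((T k).map (↑) *ᵥ fun r => v (k, r)) p := by
  simp only [mulVec, dotProduct, Fintype.sum_prod_type, map_apply,
    kronecker_one_mul_blockDiag_apply, Finset.mul_sum, Complex.ofReal_mul, mul_assoc]

end Matrix

theorem norm_lt_one_of_smul_eq_stochastic_sum {𝕜 V ι : Type*} [RCLike 𝕜] [NormedAddCommGroup V]
    [NormedSpace 𝕜 V] [Fintype ι] [DecidableEq ι] {A : Matrix ι ι ℝ}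
    (hA_nonneg : ∀ i j, 0 ≤ A i j) (hA_stoch : ∀ i, ∑ j, A i j = 1)
    (hA_irr : ∀ i j, ∃ k : ℕ, 1 ≤ k ∧ 0 < (A ^ k) i j) {T : ι → V →L[𝕜] V}
    (hT : ∀ j, ‖T j‖ ≤ 1) {k0 : ι} (hk0 : ‖T k0‖ < 1) {c : 𝕜} {w : ι → V} (hw : w ≠ 0)
    (heig : ∀ i, c • w i = ∑ j, (A i j : 𝕜) • T j (w j)) : ‖c‖ < 1 := by
  by_contra! hc
  have hT_le : ∀ j, ‖T j (w j)‖ ≤ ‖w j‖ := fun j =>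
    ((T j).le_opNorm _).trans (mul_le_of_le_one_left (norm_nonneg _) (hT j))
  have step : ∀ i j, (∀ l, ‖w l‖ ≤ ‖w i‖) → 0 < A i j → ‖T j (w j)‖ = ‖w i‖ := fun i j hi hij =>
    norm_eq_of_smul_eq_weighted_sum (hA_nonneg i) (hA_stoch i) hc
      (fun l => (hT_le l).trans (hi l)) (heig i) hij
  obtain ⟨i0, hi0⟩ := Function.ne_iff.mp hw
  obtain ⟨imax, -, himax⟩ := Finset.exists_max_image Finset.univ (‖w ·‖) ⟨i0, Finset.mem_univ _⟩
  obtain ⟨k, hk1, hpos⟩ := hA_irr imax k0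
  obtain ⟨k, rfl⟩ := Nat.exists_eq_add_of_le' hk1
  obtain ⟨x, hx, hxk0⟩ := Matrix.exists_pos_of_mul_apply_pos hA_nonneg (pow_succ A k ▸ hpos)
  have hx_max : ∀ l, ‖w l‖ ≤ ‖w x‖ :=
    Matrix.of_pow_apply_pos hA_nonneg (P := fun i => ∀ l, ‖w l‖ ≤ ‖w i‖)
      (fun i j hi hij l => (hi l).trans ((step i j hi hij).symm.le.trans (hT_le j))) k
      (fun l => himax l (Finset.mem_univ l)) hx
  have hx_pos : 0 < ‖w x‖ := (norm_pos_iff.mpr hi0).trans_le (hx_max i0)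
  have : 1 * ‖w x‖ ≤ ‖T k0‖ * ‖w x‖ :=
    calc 1 * ‖w x‖ = ‖T k0 (w k0)‖ := by rw [one_mul, step x k0 hx_max hxk0]
      _ ≤ ‖T k0‖ * ‖w x‖ := ((T k0).le_opNorm _).trans (by gcongr; exact hx_max k0)
  exact hk0.not_ge (le_of_mul_le_mul_right this hx_pos)

theorem distributed_stability_general
    {E d : ℕ}
    (A : Matrix (Fin E) (Fin E) ℝ)
    (hA_nonneg : ∀ i j, 0 ≤ A i j)
    (hA_stoch : ∀ i, ∑ j, A i j = 1)
    (hA_irr : ∀ i j, ∃ k : ℕ, 1 ≤ k ∧ 0 < (A ^ k) i j)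
    (T : Fin E → Matrix (Fin d) (Fin d) ℝ)
    (hT1 : ∀ i, ‖Matrix.toEuclideanCLM (𝕜 := ℝ) (T i)‖ ≤ 1)
    (hk : ∃ k0, ‖Matrix.toEuclideanCLM (𝕜 := ℝ) (T k0)‖ < 1)
    (B : Matrix (Fin E × Fin d) (Fin E × Fin d) ℝ)
    (hB : B = (A ⊗ₖ (1 : Matrix (Fin d) (Fin d) ℝ)) *
      Matrix.of (fun p q : Fin E × Fin d =>
        if p.1 = q.1 then T p.1 p.2 q.2 else 0)) :
    ∀ (lam : ℂ) (v : Fin E × Fin d → ℂ), v ≠ 0 →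
      (B.map (fun a => (a : ℂ))) *ᵥ v = lam • v → ‖lam‖ < 1 := by
  intro lam v hv hEig
  obtain ⟨k0, hk0⟩ := hk
  refine norm_lt_one_of_smul_eq_stochastic_sum hA_nonneg hA_stoch hA_irr
    (T := fun j => toEuclideanCLM (𝕜 := ℂ) ((T j).map (↑)))
    (fun j => (norm_toEuclideanCLM_map_ofReal_le _).trans (hT1 j))
    ((norm_toEuclideanCLM_map_ofReal_le _).trans_lt hk0)
    (w := fun i => WithLp.toLp 2 fun r => v (i, r)) ?_ fun i => ?_
  · refine fun h => hv (funext fun ⟨i, p⟩ => ?_)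
    simpa using congrFun (congrArg WithLp.ofLp (congrFun h i)) p
  · ext p
    simpa [hB, map_ofReal_kronecker_one_mul_blockDiag_mulVec, toEuclideanCLM_toLp]
      using (congrFun hEig (i, p)).symm

/-- Distributed stability (Theorem 2): if `A ∈ ℝ^{E×E}` is row-stochastic and
irreducible with nonnegative entries, the `T_i ∈ ℝ^{d×d}` are symmetric with
spectral norm `‖T_i‖₂ ≤ 1`, and `‖T_k̄‖₂ < 1` for some `k̄`, then the block
matrix `B = (A ⊗ I_d)·diag(T_1,…,T_E)` has spectral radius strictly less
than `1`. -/
theorem distributed_stability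
    {E d : ℕ}
    (A : Matrix (Fin E) (Fin E) ℝ)
    (hA_nonneg : ∀ i j, 0 ≤ A i j)
    (hA_stoch : ∀ i, ∑ j, A i j = 1)
    (hA_irr : ∀ i j, ∃ k : ℕ, 1 ≤ k ∧ 0 < (A ^ k) i j)
    (T : Fin E → Matrix (Fin d) (Fin d) ℝ)
    (hTs : ∀ i, (T i).IsSymm)
    (hT1 : ∀ i, ‖Matrix.toEuclideanCLM (𝕜 := ℝ) (T i)‖ ≤ 1)
    (hk : ∃ k0, ‖Matrix.toEuclideanCLM (𝕜 := ℝ) (T k0)‖ < 1)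
    (B : Matrix (Fin E × Fin d) (Fin E × Fin d) ℝ)
    (hB : B = (A ⊗ₖ (1 : Matrix (Fin d) (Fin d) ℝ)) *
      Matrix.of (fun p q : Fin E × Fin d =>
        if p.1 = q.1 then T p.1 p.2 q.2 else 0)) :
    ∀ (lam : ℂ) (v : Fin E × Fin d → ℂ), v ≠ 0 →
      (B.map (fun a => (a : ℂ))) *ᵥ v = lam • v → ‖lam‖ < 1 :=
  distributed_stability_general A hA_nonneg hA_stoch hA_irr T hT1 hk B hB
end

section
/- Key inequality in the proof of Theorem 2: if A is row-stochastic with nonnegative entries, T_j are matrices with ‖T_j x‖ ≤ ‖x‖ for all x, λ is an eigenvalue of B = (A⊗I)·diag(T_j) with |λ| ≥ 1 and eigenvector v = col{v_i}, then for every i: ‖v_i‖ ≤ (1/|λ|) Σ_j a_{ij} ‖v_j‖, and for an index h attaining the maximum block norm, ‖v_j‖ = ‖v_h‖ and ‖T_j v_j‖ = ‖v_j‖ for all j with a_{hj} > 0. -/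
open Matrix Finset

/-!
Taking norms in `λ v_i = Σ_j a_{ij} T_j v_j` and using that the `T_j` are contractions gives
`|λ| ‖v_i‖ ≤ Σ_j a_{ij} ‖T_j v_j‖ ≤ Σ_j a_{ij} ‖v_j‖`. At a block `h` of maximal norm the right-hand
side is a convex combination of numbers at most `‖v_h‖`, so with `|λ| ≥ 1` the whole chain
`‖v_h‖ ≤ |λ| ‖v_h‖ ≤ Σ_j a_{hj} ‖T_j v_j‖ ≤ Σ_j a_{hj} ‖v_j‖ ≤ ‖v_h‖` is tight, and a tight weighted
sum of termwise inequalities is tight in every term of positive weight.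
-/

lemma abs_mul_norm_le_sum_mul_norm {ι F : Type*} [Fintype ι] [SeminormedAddCommGroup F]
    [NormedSpace ℝ F] {lam : ℝ} {x : F} {w : ι → ℝ} {y : ι → F} (hw : ∀ i, 0 ≤ w i)
    (h : lam • x = ∑ i, w i • y i) :
    |lam| * ‖x‖ ≤ ∑ i, w i * ‖y i‖ :=
  calc |lam| * ‖x‖ = ‖∑ i, w i • y i‖ := by rw [← h, norm_smul, Real.norm_eq_abs]
    _ ≤ ∑ i, ‖w i • y i‖ := norm_sum_le _ _
    _ = ∑ i, w i * ‖y i‖ :=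
      sum_congr rfl fun i _ => by rw [norm_smul, Real.norm_of_nonneg (hw i)]

lemma sum_mul_const_of_sum_eq_one {ι : Type*} [Fintype ι] {w : ι → ℝ} (hw : ∑ i, w i = 1)
    (c : ℝ) : ∑ i, w i * c = c := by
  rw [← sum_mul, hw, one_mul]

lemma eq_of_le_of_sum_mul_le {ι : Type*} [Fintype ι] {w f g : ι → ℝ} (hw : ∀ i, 0 ≤ w i)
    (hfg : ∀ i, f i ≤ g i) (hsum : ∑ i, w i * g i ≤ ∑ i, w i * f i) {j : ι} (hj : 0 < w j) :
    f j = g j := by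
  have hle : ∀ i ∈ univ, w i * f i ≤ w i * g i := fun i _ =>
    mul_le_mul_of_nonneg_left (hfg i) (hw i)
  have heq := (sum_eq_sum_iff_of_le hle).1 (le_antisymm (sum_le_sum hle) hsum) j (mem_univ j)
  exact mul_left_cancel₀ hj.ne' heq

/-- Key inequality in the proof of Theorem 2: if `A` is row-stochastic with
nonnegative entries, `‖T_j x‖ ≤ ‖x‖` for all `x`, and `λ` is an eigenvalue
with `|λ| ≥ 1` of `B = (A ⊗ I)·diag(T_j)` with eigenvector `v = col{v_i}`
(i.e. `λ v_i = Σ_j a_{ij} T_j v_j` for all `i`), then for every `i`: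
`‖v_i‖ ≤ (1/|λ|) Σ_j a_{ij} ‖v_j‖`, and for any index `h` attaining the
maximum block norm, every `j` with `a_{hj} > 0` satisfies `‖v_j‖ = ‖v_h‖` and
`‖T_j v_j‖ = ‖v_j‖`. -/
theorem key_inequality_distributed
    {E d : ℕ}
    (A : Matrix (Fin E) (Fin E) ℝ)
    (hA_nonneg : ∀ i j, 0 ≤ A i j)
    (hA_stoch : ∀ i, ∑ j, A i j = 1)
    (T : Fin E → Matrix (Fin d) (Fin d) ℝ)
    (hT : ∀ j (x : EuclideanSpace ℝ (Fin d)),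
      ‖Matrix.toEuclideanLin (T j) x‖ ≤ ‖x‖)
    (lam : ℝ) (hlam : 1 ≤ |lam|)
    (v : Fin E → EuclideanSpace ℝ (Fin d))
    (heig : ∀ i, lam • v i = ∑ j, A i j • Matrix.toEuclideanLin (T j) (v j)) :
    (∀ i, ‖v i‖ ≤ (1 / |lam|) * ∑ j, A i j * ‖v j‖) ∧
    ∀ h, (∀ i, ‖v i‖ ≤ ‖v h‖) →
      ∀ j, 0 < A h j →
        ‖v j‖ = ‖v h‖ ∧ ‖Matrix.toEuclideanLin (T j) (v j)‖ = ‖v j‖ := by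
  have hlam_v : ∀ i, |lam| * ‖v i‖ ≤ ∑ j, A i j * ‖toEuclideanLin (T j) (v j)‖ := fun i =>
    abs_mul_norm_le_sum_mul_norm (hA_nonneg i) (heig i)
  have hTv : ∀ i, ∑ j, A i j * ‖toEuclideanLin (T j) (v j)‖ ≤ ∑ j, A i j * ‖v j‖ := fun i =>
    sum_le_sum fun j _ => mul_le_mul_of_nonneg_left (hT j (v j)) (hA_nonneg i j)
  refine ⟨fun i => ?_, fun h hmax j hj => ?_⟩
  · rw [one_div, inv_mul_eq_div, le_div_iff₀' (one_pos.trans_le hlam)]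
    exact (hlam_v i).trans (hTv i)
  · have hvh : ‖v h‖ ≤ ∑ j, A h j * ‖toEuclideanLin (T j) (v j)‖ :=
      (le_mul_of_one_le_left (norm_nonneg _) hlam).trans (hlam_v h)
    have hsum_v : ∑ j, A h j * ‖v j‖ ≤ ‖v h‖ := by
      rw [← sum_mul_const_of_sum_eq_one (hA_stoch h) ‖v h‖]
      exact sum_le_sum fun j _ => mul_le_mul_of_nonneg_left (hmax j) (hA_nonneg h j)
    refine ⟨eq_of_le_of_sum_mul_le (hA_nonneg h) hmax ?_ hj,
      eq_of_le_of_sum_mul_le (hA_nonneg h) (fun j => hT j (v j)) (hsum_v.trans hvh) hj⟩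
    rw [sum_mul_const_of_sum_eq_one (hA_stoch h)]
    exact hvh.trans (hTv h)
end
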